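/- Let L be an ortholattice admitting a strong set of states, i.e., a nonempty set S of states such that for all a, b ∈ L, if m a = 1 implies m b = 1 for every m ∈ S, then a ≤ b. Then L is orthomodular: a ≤ b implies a ⊔ (aᶜ ⊓ b) = b for all a, b ∈ L. -/

import Mathlib

/-- An ortholattice: a bounded lattice with an orthocomplementation. -/
class Ortholattice (α : Type*) extends Lattice α, BoundedOrder α, Compl α where
  compl_compl : ∀ x : α, xᶜᶜ = x
  compl_antitone : ∀ x y : α, x ≤ y → yᶜ ≤ xᶜ
  inf_compl : ∀ x : α, x ⊓ xᶜ = ⊥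
  sup_compl : ∀ x : α, x ⊔ xᶜ = ⊤

/-- A state on an ortholattice: a `[0,1]`-valued function with `m ⊤ = 1` that is
additive on orthogonal pairs. -/
structure IsState {α : Type*} [Ortholattice α] (m : α → ℝ) : Prop where
  nonneg : ∀ a, 0 ≤ m a
  le_one : ∀ a, m a ≤ 1
  map_top : m ⊤ = 1
  additive : ∀ a b, a ≤ bᶜ → m (a ⊔ b) = m a + m b

/-
If `a ≤ b` and a state `m` gives `b` weight one, then `bᶜ` is weightless, so the complement
`a ⊔ bᶜ` of `aᶜ ⊓ b` has weight `m a`; hence `a` and `aᶜ ⊓ b` are orthogonal with weights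
summing to one, and `a ⊔ (aᶜ ⊓ b)` has weight one too. Strength of the set of states turns this
into `b ≤ a ⊔ (aᶜ ⊓ b)`, and the reverse inequality holds in any lattice.
-/

namespace Ortholattice

variable {α : Type*} [Ortholattice α]

theorem compl_le_compl_iff {x y : α} : xᶜ ≤ yᶜ ↔ y ≤ x :=
  ⟨fun h => by simpa only [Ortholattice.compl_compl] using compl_antitone _ _ h, compl_antitone y x⟩

theorem compl_le_comm {x y : α} : xᶜ ≤ y ↔ yᶜ ≤ x := by
  rw [← compl_le_compl_iff, Ortholattice.compl_compl]

theorem compl_inf_eq (x y : α) : (x ⊓ y)ᶜ = xᶜ ⊔ yᶜ := by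
  refine le_antisymm ?_ (sup_le (compl_antitone _ _ inf_le_left) (compl_antitone _ _ inf_le_right))
  rw [← compl_le_compl_iff, Ortholattice.compl_compl]
  exact le_inf (compl_le_comm.mp le_sup_left) (compl_le_comm.mp le_sup_right)

theorem le_compl_compl_inf (a b : α) : a ≤ (aᶜ ⊓ b)ᶜ := by
  rw [compl_inf_eq, Ortholattice.compl_compl]
  exact le_sup_left

end Ortholattice

namespace IsState

open Ortholattice

variable {α : Type*} [Ortholattice α] {m : α → ℝ}

theorem map_compl (hm : IsState m) (x : α) : m xᶜ = 1 - m x := by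
  have h := hm.additive x xᶜ (Ortholattice.compl_compl x).ge
  rw [Ortholattice.sup_compl, hm.map_top] at h
  linarith

theorem map_compl_inf_of_le (hm : IsState m) {a b : α} (hab : a ≤ b) (hb : m b = 1) :
    m (aᶜ ⊓ b) = 1 - m a := by
  have hbc : m bᶜ = 0 := by rw [hm.map_compl, hb, sub_self]
  have hsup : m (a ⊔ bᶜ) = m a := by
    rw [hm.additive a bᶜ (by rwa [Ortholattice.compl_compl]), hbc, add_zero]
  have h := hm.map_compl (aᶜ ⊓ b)
  rw [compl_inf_eq, Ortholattice.compl_compl, hsup] at h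
  linarith

theorem map_sup_compl_inf_of_le (hm : IsState m) {a b : α} (hab : a ≤ b) (hb : m b = 1) :
    m (a ⊔ (aᶜ ⊓ b)) = 1 := by
  rw [hm.additive a _ (le_compl_compl_inf a b), hm.map_compl_inf_of_le hab hb, add_sub_cancel]

end IsState

theorem stmt_4_general (α : Type*) [Ortholattice α] (S : Set (α → ℝ))
    (hstate : ∀ m ∈ S, IsState m)
    (hstrong : ∀ a b : α, (∀ m ∈ S, m a = 1 → m b = 1) → a ≤ b) :
    ∀ a b : α, a ≤ b → a ⊔ (aᶜ ⊓ b) = b := fun _ _ hab =>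
  le_antisymm (sup_le hab inf_le_right)
    (hstrong _ _ fun m hm hb => (hstate m hm).map_sup_compl_inf_of_le hab hb)

/-- An ortholattice admitting a strong set of states is orthomodular. -/
theorem stmt_4 (α : Type*) [Ortholattice α] (S : Set (α → ℝ)) (hne : S.Nonempty)
    (hstate : ∀ m ∈ S, IsState m)
    (hstrong : ∀ a b : α, (∀ m ∈ S, m a = 1 → m b = 1) → a ≤ b) :
    ∀ a b : α, a ≤ b → a ⊔ (aᶜ ⊓ b) = b :=
  stmt_4_general α S hstate hstrong
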